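/- arXiv:1305.2648 — 3 statements merged into one kernel-verified Lean document; each statement's English description precedes it below -/
import Mathlib

section
/- Let ℓ : ℝ → [0,∞) be convex with ℓ(z) → 0 as z → -∞ and ℓ(0) > 0. If g is a subgradient of ℓ at 0, then ℓ*(φ) < 0 for every φ ∈ (0, g), and ℓ* attains its minimum value at g. -/
/-!
The subgradient inequality says `g x - ℓ x ≤ -ℓ 0` for every `x`, with equality at `0`, so
`ℓ* g = -ℓ 0`, while `ℓ* φ ≥ φ 0 - ℓ 0 = -ℓ 0` for every `φ`. For `0 < φ < g`, the function
`φ x - ℓ x` stays below a negative constant: left of `-M` because `ℓ ≥ 0` and `φ x ≤ -φ M`, right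
of `-M` because it is at most `-ℓ 0 + (g - φ) M`, negative once `(g - φ) M < ℓ 0`.
-/

/-- Fenchel conjugate (valued in `EReal`) of a real function. -/
noncomputable def fenchelConj (ℓ : ℝ → ℝ) (φ : ℝ) : EReal :=
  ⨆ x : ℝ, ((φ * x - ℓ x : ℝ) : EReal)

section FenchelConj

variable {ℓ : ℝ → ℝ} {g : ℝ}

theorem fenchelConj_le_coe {φ c : ℝ} (h : ∀ x, φ * x - ℓ x ≤ c) : fenchelConj ℓ φ ≤ c :=
  iSup_le fun x => EReal.coe_le_coe_iff.mpr (h x)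

theorem coe_le_fenchelConj (φ x : ℝ) : ((φ * x - ℓ x : ℝ) : EReal) ≤ fenchelConj ℓ φ :=
  le_iSup (fun x : ℝ => ((φ * x - ℓ x : ℝ) : EReal)) x

theorem neg_apply_zero_le_fenchelConj (φ : ℝ) : ((-ℓ 0 : ℝ) : EReal) ≤ fenchelConj ℓ φ := by
  simpa using coe_le_fenchelConj (ℓ := ℓ) φ 0

theorem fenchelConj_eq_neg_apply_zero_of_subgradient (hsub : ∀ y, ℓ 0 + g * y ≤ ℓ y) :
    fenchelConj ℓ g = ((-ℓ 0 : ℝ) : EReal) :=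
  le_antisymm (fenchelConj_le_coe fun x => by linarith [hsub x]) (neg_apply_zero_le_fenchelConj g)

theorem fenchelConj_subgradient_le (hsub : ∀ y, ℓ 0 + g * y ≤ ℓ y) (φ : ℝ) :
    fenchelConj ℓ g ≤ fenchelConj ℓ φ := by
  rw [fenchelConj_eq_neg_apply_zero_of_subgradient hsub]
  exact neg_apply_zero_le_fenchelConj φ

theorem sub_le_max_of_subgradient (hnonneg : ∀ x, 0 ≤ ℓ x) (hsub : ∀ y, ℓ 0 + g * y ≤ ℓ y)
    {φ : ℝ} (hφ0 : 0 ≤ φ) (hφg : φ ≤ g) (M x : ℝ) :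
    φ * x - ℓ x ≤ max (-(φ * M)) ((g - φ) * M - ℓ 0) := by
  rcases le_or_gt x (-M) with hx | hx
  · exact le_max_of_le_left (by nlinarith [hnonneg x])
  · exact le_max_of_le_right (by nlinarith [hsub x])

theorem fenchelConj_neg_of_mem_Ioo (hnonneg : ∀ x, 0 ≤ ℓ x) (hpos : 0 < ℓ 0)
    (hsub : ∀ y, ℓ 0 + g * y ≤ ℓ y) {φ : ℝ} (hφ : φ ∈ Set.Ioo 0 g) : fenchelConj ℓ φ < 0 := by
  obtain ⟨hφ0, hφg⟩ := hφ
  have hgφ : 0 < g - φ := sub_pos.mpr hφg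
  set M := ℓ 0 / (2 * (g - φ))
  have hM : (g - φ) * M = ℓ 0 / 2 := by simp only [M]; field_simp
  have hbound : max (-(φ * M)) ((g - φ) * M - ℓ 0) < 0 :=
    max_lt (neg_neg_of_pos (by positivity)) (by linarith)
  calc fenchelConj ℓ φ ≤ (max (-(φ * M)) ((g - φ) * M - ℓ 0) : ℝ) :=
        fenchelConj_le_coe (sub_le_max_of_subgradient hnonneg hsub hφ0.le hφg.le M)
    _ < 0 := by exact_mod_cast hbound

end FenchelConj

theorem conj_neg_on_subgradient_interval_general (ℓ : ℝ → ℝ) (g : ℝ)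
    (hnonneg : ∀ x, 0 ≤ ℓ x)
    (hpos : 0 < ℓ 0)
    (hsub : ∀ y : ℝ, ℓ 0 + g * y ≤ ℓ y) :
    (∀ φ ∈ Set.Ioo (0 : ℝ) g, fenchelConj ℓ φ < 0) ∧
    (∀ φ : ℝ, fenchelConj ℓ g ≤ fenchelConj ℓ φ) :=
  ⟨fun _ hφ => fenchelConj_neg_of_mem_Ioo hnonneg hpos hsub hφ, fenchelConj_subgradient_le hsub⟩

theorem conj_neg_on_subgradient_interval (ℓ : ℝ → ℝ) (g : ℝ)
    (hconv : ConvexOn ℝ Set.univ ℓ)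
    (hnonneg : ∀ x, 0 ≤ ℓ x)
    (hlim : Filter.Tendsto ℓ Filter.atBot (nhds 0))
    (hpos : 0 < ℓ 0)
    (hsub : ∀ y : ℝ, ℓ 0 + g * y ≤ ℓ y) :
    (∀ φ ∈ Set.Ioo (0 : ℝ) g, fenchelConj ℓ φ < 0) ∧
    (∀ φ : ℝ, fenchelConj ℓ g ≤ fenchelConj ℓ φ) :=
  conj_neg_on_subgradient_interval_general ℓ g hnonneg hpos hsub
end

section
/- Let ξ be a Borel probability measure supported on [−1,+1] and ε ∈ (0,1]. With c_ε as above, define p_ε(r) := (1/ε)(1[r < c_ε] + ((ε − ξ((−∞,c_ε)))/ξ({c_ε}))·1[r = c_ε]) (with convention 0/0 = 0). Then ∫ p_ε dξ = 1, 0 ≤ p_ε ≤ 1/ε everywhere, and p_ε minimizes ∫ r·p(r) dξ(r) over all measurable p with ∫ p dξ = 1 and 0 ≤ p ≤ 1/ε ξ-a.e. -/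
/-!
Write `a = ξ (-∞, c)` and `b = ξ {c}`. Left continuity of `r ↦ ξ (-∞, r)` and right continuity of
`r ↦ ξ (-∞, r]` give `a ≤ ε ≤ a + b` at the supremum `c`, so the weight `θ = (ε - a) / b` of the
atom lies in `[0, 1]` and `∫ p_ε dξ = (a + θ b) / ε = 1`. Optimality is the bathtub principle:
`p_ε` is maximal below `c` and vanishes above `c`, so `(r - c) (p r - p_ε r) ≥ 0` for every
admissible `p`, and integrating this against `ξ` gives `∫ r p ≥ ∫ r p_ε` since `∫ p = ∫ p_ε`.
-/

open MeasureTheory Set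
open scoped ENNReal

section Continuity

variable {μ : Measure ℝ} {c : ℝ} {t : ℝ≥0∞}

lemma measure_Iio_le_of_forall_lt (h : ∀ y < c, μ (Iio y) ≤ t) : μ (Iio c) ≤ t := by
  obtain ⟨u, hu_mono, hu_lt, hu_lim⟩ := exists_seq_strictMono_tendsto c
  have hIio : Iio c = ⋃ n, Iio (u n) := by
    ext y
    simp only [mem_Iio, mem_iUnion]
    exact ⟨fun hy => (hu_lim.eventually (lt_mem_nhds hy)).exists,
      fun ⟨n, hn⟩ => hn.trans (hu_lt n)⟩
  rw [hIio, Monotone.measure_iUnion fun m n hmn => Iio_subset_Iio (hu_mono.monotone hmn)]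
  exact iSup_le fun n => h _ (hu_lt n)

lemma le_measure_Iic_of_forall_gt [IsFiniteMeasure μ] (h : ∀ y > c, t ≤ μ (Iio y)) :
    t ≤ μ (Iic c) := by
  obtain ⟨u, hu_anti, hu_gt, hu_lim⟩ := exists_seq_strictAnti_tendsto c
  have hIic : Iic c = ⋂ n, Iio (u n) := by
    ext y
    simp only [mem_Iic, mem_iInter, mem_Iio]
    exact ⟨fun hy n => hy.trans_lt (hu_gt n), fun hy => ge_of_tendsto' hu_lim fun n => (hy n).le⟩
  rw [hIic, Antitone.measure_iInter (fun m n hmn => Iio_subset_Iio (hu_anti.antitone hmn))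
    (fun _ => measurableSet_Iio.nullMeasurableSet) ⟨0, measure_ne_top μ _⟩]
  exact le_iInf fun n => h _ (hu_gt n)

end Continuity

section Cutoff

variable {μ : Measure ℝ} {a b : ℝ} {t : ℝ≥0∞}

lemma measure_Iio_sSup_le (hab : a ≤ b) (ha : μ (Iio a) ≤ t) :
    μ (Iio (sSup {x ∈ Icc a b | μ (Iio x) ≤ t})) ≤ t := by
  refine measure_Iio_le_of_forall_lt fun y hy => ?_
  obtain ⟨x, hx, hyx⟩ := exists_lt_of_lt_csSup (by exact ⟨a, left_mem_Icc.2 hab, ha⟩) hy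
  exact (measure_mono (Iio_subset_Iio hyx.le)).trans hx.2

lemma le_measure_Iic_sSup [IsFiniteMeasure μ] (hab : a ≤ b) (ha : μ (Iio a) ≤ t)
    (hb : t ≤ μ (Iic b)) : t ≤ μ (Iic (sSup {x ∈ Icc a b | μ (Iio x) ≤ t})) := by
  set S := {x ∈ Icc a b | μ (Iio x) ≤ t}
  have hbdd : BddAbove S := ⟨b, fun x hx => hx.1.2⟩
  have haS : a ≤ sSup S := le_csSup hbdd ⟨left_mem_Icc.2 hab, ha⟩
  refine le_measure_Iic_of_forall_gt fun y hy => ?_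
  rcases le_or_gt y b with hyb | hby
  · by_contra! hlt
    exact (le_csSup hbdd ⟨⟨haS.trans hy.le, hyb⟩, hlt.le⟩).not_gt hy
  · exact hb.trans (measure_mono (Iic_subset_Iio.2 hby))

lemma measureReal_Iio_le_le_measureReal_Iic_of_eq_sSup [IsProbabilityMeasure μ] {c ε : ℝ}
    (hab : a ≤ b) (hsupp : μ (Icc a b) = 1) (hε : ε ∈ Icc 0 1)
    (hc : c = sSup {x ∈ Icc a b | μ (Iio x) ≤ ENNReal.ofReal ε}) :
    μ.real (Iio c) ≤ ε ∧ ε ≤ μ.real (Iic c) := by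
  have hlow : μ (Iio a) ≤ ENNReal.ofReal ε := by
    have hnull : μ (Icc a b)ᶜ = 0 := (prob_compl_eq_zero_iff measurableSet_Icc).2 hsupp
    exact (measure_mono_null (fun x (hx : x < a) => notMem_Icc_of_lt hx) hnull).trans_le
      zero_le
  have hhigh : ENNReal.ofReal ε ≤ μ (Iic b) := calc
    ENNReal.ofReal ε ≤ 1 := ENNReal.ofReal_le_one.2 hε.2
    _ = μ (Icc a b) := hsupp.symm
    _ ≤ μ (Iic b) := measure_mono Icc_subset_Iic_self
  subst hc
  exact ⟨ENNReal.toReal_le_of_le_ofReal hε.1 (measure_Iio_sSup_le hab hlow),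
    (ENNReal.ofReal_le_iff_le_toReal (measure_ne_top _ _)).1
      (le_measure_Iic_sSup hab hlow hhigh)⟩

end Cutoff

section Weight

variable {a b ε : ℝ}

lemma sub_div_mem_Icc_of_le_add (h₁ : a ≤ ε) (h₂ : ε ≤ a + b) : (ε - a) / b ∈ Icc 0 1 := by
  rcases (show 0 ≤ b by linarith).eq_or_lt with rfl | hb
  · simp
  · exact ⟨div_nonneg (by linarith) hb.le, (div_le_one hb).2 (by linarith)⟩

lemma add_sub_div_mul_of_le_add (h₁ : a ≤ ε) (h₂ : ε ≤ a + b) : a + (ε - a) / b * b = ε := by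
  rcases (show 0 ≤ b by linarith).eq_or_lt with rfl | hb
  · simp only [add_zero] at h₂
    simp [le_antisymm h₂ h₁]
  · rw [div_mul_cancel₀ _ hb.ne']
    ring

end Weight

section StepDensity

noncomputable def stepDensity (c u v : ℝ) : ℝ → ℝ :=
  (Iio c).indicator (fun _ => u) + ({c} : Set ℝ).indicator (fun _ => v)

variable {c u v r : ℝ}

lemma stepDensity_apply :
    stepDensity c u v r = (if r < c then u else 0) + (if r = c then v else 0) := by
  simp only [stepDensity, Pi.add_apply, indicator_apply, mem_Iio, mem_singleton_iff]

lemma stepDensity_of_lt (h : r < c) : stepDensity c u v r = u := by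
  simp [stepDensity, h, h.ne]

lemma stepDensity_self : stepDensity c u v c = v := by
  simp [stepDensity]

lemma stepDensity_of_gt (h : c < r) : stepDensity c u v r = 0 := by
  simp [stepDensity, h.not_gt, h.ne']

lemma stepDensity_mem_Icc (hv : 0 ≤ v) (hvu : v ≤ u) : stepDensity c u v r ∈ Icc 0 u := by
  rcases lt_trichotomy r c with h | rfl | h
  · simpa [stepDensity_of_lt h] using hv.trans hvu
  · simpa [stepDensity_self] using ⟨hv, hvu⟩
  · simpa [stepDensity_of_gt h] using hv.trans hvu

variable {μ : Measure ℝ} [IsFiniteMeasure μ]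

lemma integrable_stepDensity : Integrable (stepDensity c u v) μ :=
  ((integrable_const u).indicator measurableSet_Iio).add
    ((integrable_const v).indicator (measurableSet_singleton c))

lemma integral_stepDensity :
    ∫ r, stepDensity c u v r ∂μ = μ.real (Iio c) * u + μ.real {c} * v := by
  simp only [stepDensity, Pi.add_apply]
  rw [integral_add ((integrable_const u).indicator measurableSet_Iio)
    ((integrable_const v).indicator (measurableSet_singleton c)),
    integral_indicator_const _ measurableSet_Iio,
    integral_indicator_const _ (measurableSet_singleton c), smul_eq_mul, smul_eq_mul]

end StepDensity

theorem integral_mul_le_integral_mul_of_bathtub {α : Type*} [MeasurableSpace α] {μ : Measure α}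
    {g p q : α → ℝ} {c M : ℝ} (hp : Integrable p μ) (hq : Integrable q μ)
    (hgp : Integrable (fun x => g x * p x) μ) (hgq : Integrable (fun x => g x * q x) μ)
    (hpq : ∫ x, q x ∂μ = ∫ x, p x ∂μ) (hp_mem : ∀ᵐ x ∂μ, p x ∈ Icc 0 M)
    (hq_lt : ∀ x, g x < c → q x = M) (hq_gt : ∀ x, c < g x → q x = 0) :
    ∫ x, g x * q x ∂μ ≤ ∫ x, g x * p x ∂μ := by
  have hnonneg : 0 ≤ ∫ x, (g x - c) * (p x - q x) ∂μ := by
    refine integral_nonneg_of_ae ?_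
    filter_upwards [hp_mem] with x hx
    rcases lt_trichotomy (g x) c with h | h | h
    · rw [hq_lt x h]
      exact mul_nonneg_of_nonpos_of_nonpos (by linarith) (by linarith [hx.2])
    · simp [h]
    · rw [hq_gt x h]
      exact mul_nonneg (by linarith) (by linarith [hx.1])
  have hexpand : ∫ x, (g x - c) * (p x - q x) ∂μ
      = (∫ x, g x * p x ∂μ - ∫ x, g x * q x ∂μ) - c * (∫ x, p x ∂μ - ∫ x, q x ∂μ) := by
    have hgpq : Integrable (fun x => g x * p x - g x * q x) μ := hgp.sub hgq
    have hcpq : Integrable (fun x => c * (p x - q x)) μ := (hp.sub hq).const_mul c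
    rw [← integral_sub hgp hgq, ← integral_sub hp hq, ← integral_const_mul,
      ← integral_sub hgpq hcpq]
    congr 1 with x
    ring
  rw [hexpand, hpq] at hnonneg
  linarith

theorem cutoff_density_optimal (ξ : Measure ℝ) [IsProbabilityMeasure ξ]
    (hsupp : ξ (Set.Icc (-1 : ℝ) 1) = 1) (ε : ℝ) (hε : ε ∈ Set.Ioc (0 : ℝ) 1)
    (c : ℝ)
    (hc : c = sSup {c ∈ Set.Icc (-1 : ℝ) 1 | ξ (Set.Iio c) ≤ ENNReal.ofReal ε})
    (pε : ℝ → ℝ)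
    (hpε : ∀ r : ℝ, pε r = (1 / ε) *
      ((if r < c then 1 else 0) +
        ((ε - (ξ (Set.Iio c)).toReal) / (ξ {c}).toReal) * (if r = c then 1 else 0))) :
    (∫ r, pε r ∂ξ) = 1 ∧
    (∀ r, 0 ≤ pε r ∧ pε r ≤ 1 / ε) ∧
    (∀ p : ℝ → ℝ, Integrable p ξ → (∫ r, p r ∂ξ) = 1 →
      (∀ᵐ r ∂ξ, 0 ≤ p r ∧ p r ≤ 1 / ε) →
      (∫ r, r * pε r ∂ξ) ≤ ∫ r, r * p r ∂ξ) := by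
  obtain ⟨h₁, hIic⟩ := measureReal_Iio_le_le_measureReal_Iic_of_eq_sSup (by norm_num) hsupp
    (Ioc_subset_Icc_self hε) hc
  have h₂ : ε ≤ ξ.real (Iio c) + ξ.real {c} := by
    rwa [← measureReal_union (by simp) (measurableSet_singleton c), Iio_union_right]
  set θ := (ε - (ξ (Iio c)).toReal) / (ξ {c}).toReal
  have hθ : θ ∈ Icc 0 1 := sub_div_mem_Icc_of_le_add h₁ h₂
  have hpε_eq : pε = stepDensity c (1 / ε) (θ / ε) := by
    funext r
    rw [hpε, stepDensity_apply]
    split_ifs <;> ring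
  have hint : ∫ r, pε r ∂ξ = 1 := by
    have hmass : ξ.real (Iio c) + θ * ξ.real {c} = ε := add_sub_div_mul_of_le_add h₁ h₂
    rw [hpε_eq, integral_stepDensity]
    field_simp [hε.1.ne']
    linarith
  refine ⟨hint, fun r => hpε_eq ▸ stepDensity_mem_Icc (div_nonneg hθ.1 hε.1.le)
    (div_le_div_of_nonneg_right hθ.2 hε.1.le),
    fun p hp hp1 hp_mem => ?_⟩
  have habs : ∀ᵐ r ∂ξ, ‖r‖ ≤ 1 := by
    filter_upwards [mem_ae_iff.2 ((prob_compl_eq_zero_iff measurableSet_Icc).2 hsupp)] with r hr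
    exact abs_le.2 hr
  rw [hpε_eq] at hint ⊢
  exact integral_mul_le_integral_mul_of_bathtub hp integrable_stepDensity
    (hp.bdd_mul aestronglyMeasurable_id habs)
    (integrable_stepDensity.bdd_mul aestronglyMeasurable_id habs)
    (hint.trans hp1.symm) hp_mem (fun _ => stepDensity_of_lt) (fun _ => stepDensity_of_gt)
end

section
/- Let ν be a probability measure on Z, ℓ : ℝ → ℝ a nonnegative convex Lipschitz loss with Lipschitz constant β, and let the conjugate functional be (∫ℓ)*(p) := sup{∫ fp dν − ∫ ℓ(f) dν : f ∈ L¹(ν)} for p ∈ L^∞(ν). If ν({z : p(z) ∉ [0, β]}) > 0, then (∫ℓ)*(p) = ∞. -/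
/-!
Test the supremum on multiples of indicators `c • 1_S`. If `p < 0` on a set `S` of positive
measure, take `f = -c • 1_S`: the linear term grows like `c * |∫_S p|`, while `∫ ℓ ∘ f` stays
bounded since `ℓ → 0` at `-∞`. If `p > β` on such an `S`, take `f = c • 1_S`: the Lipschitz bound
`ℓ c ≤ ℓ 0 + β c` makes the objective at least `c * ∫_S (p - β) - ℓ 0`.
-/

open MeasureTheory Filter Set Topology

theorem EReal.iSup_coe_eq_top_of_tendsto {ι α : Type*} {l : Filter α} [l.NeBot] {g : ι → ℝ}
    (F : α → ι) (h : Tendsto (g ∘ F) l atTop) : ⨆ i, (g i : EReal) = ⊤ := by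
  refine (EReal.eq_top_iff_forall_lt _).2 fun y => ?_
  obtain ⟨a, ha⟩ := (h.eventually_gt_atTop y).exists
  exact (EReal.coe_lt_coe_iff.2 ha).trans_le (le_iSup (fun i => (g i : EReal)) (F a))

theorem MeasureTheory.setIntegral_pos_of_pos {X : Type*} [MeasurableSpace X] {μ : Measure X}
    {s : Set X} {f : X → ℝ} (hs : MeasurableSet s) (hf : IntegrableOn f s μ)
    (hpos : ∀ x ∈ s, 0 < f x) (hμ : μ s ≠ 0) : 0 < ∫ x in s, f x ∂μ := by
  refine (setIntegral_pos_iff_support_of_nonneg_ae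
    (ae_restrict_of_forall_mem hs fun x hx => (hpos x hx).le) hf).2 ?_
  have hsupp : s ⊆ Function.support f := fun x hx => (hpos x hx).ne'
  rwa [inter_eq_self_of_subset_right hsupp, pos_iff_ne_zero]

section ConjObjective

variable {Z : Type*} [MeasurableSpace Z] (μ : Measure Z) (ℓ : ℝ → ℝ) (p : Z → ℝ)

noncomputable def conjObjective (f : Z → ℝ) : ℝ := ∫ z, f z * p z ∂μ - ∫ z, ℓ (f z) ∂μ

variable {μ ℓ p} [IsFiniteMeasure μ] {S : Set Z}

theorem conjObjective_indicator_const (hS : MeasurableSet S) (t : ℝ) :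
    conjObjective μ ℓ p (S.indicator fun _ => t) =
      t * ∫ z in S, p z ∂μ - (ℓ t * μ.real S + ℓ 0 * μ.real Sᶜ) := by
  have hloss : (fun z => ℓ (S.indicator (fun _ => t) z)) =
      fun z => S.indicator (fun _ => ℓ t) z + Sᶜ.indicator (fun _ => ℓ 0) z := by
    ext z
    by_cases hz : z ∈ S <;> simp [hz]
  rw [conjObjective, hloss, integral_add ((integrable_const _).indicator hS)
      ((integrable_const _).indicator hS.compl), integral_indicator_const _ hS,
    integral_indicator_const _ hS.compl]
  simp only [← indicator_mul_left, integral_indicator hS, integral_const_mul]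
  ring

theorem tendsto_conjObjective_indicator_neg (hS : MeasurableSet S)
    (hpS : ∫ z in S, p z ∂μ < 0) (hlim : Tendsto ℓ atBot (𝓝 0)) :
    Tendsto (fun c : ℝ => conjObjective μ ℓ p (S.indicator fun _ => -c)) atTop atTop := by
  have hloss : Tendsto (fun c : ℝ => ℓ (-c) * μ.real S + ℓ 0 * μ.real Sᶜ) atTop
      (𝓝 (0 * μ.real S + ℓ 0 * μ.real Sᶜ)) :=
    ((hlim.comp tendsto_neg_atTop_atBot).mul_const _).add_const _
  simp only [conjObjective_indicator_const hS, neg_mul, sub_eq_add_neg, ← mul_neg]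
  exact (tendsto_id.atTop_mul_const (neg_pos.2 hpS)).atTop_add hloss.neg

theorem tendsto_conjObjective_indicator (hS : MeasurableSet S) {β : ℝ}
    (hgrowth : ∀ c, 0 ≤ c → ℓ c ≤ ℓ 0 + β * c) (hpS : β * μ.real S < ∫ z in S, p z ∂μ) :
    Tendsto (fun c : ℝ => conjObjective μ ℓ p (S.indicator fun _ => c)) atTop atTop := by
  have hlin : Tendsto (fun c : ℝ => c * (∫ z in S, p z ∂μ - β * μ.real S) -
      ℓ 0 * (μ.real S + μ.real Sᶜ)) atTop atTop :=
    tendsto_atTop_add_const_right _ _ (tendsto_id.atTop_mul_const (sub_pos.2 hpS))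
  refine tendsto_atTop_mono' _ ((eventually_ge_atTop 0).mono fun c hc => ?_) hlin
  dsimp only
  rw [conjObjective_indicator_const hS]
  nlinarith [hgrowth c hc, measureReal_nonneg (μ := μ) (s := S)]

end ConjObjective

theorem conj_functional_infinite_off_range_general {Z : Type*} [MeasurableSpace Z]
    (ν : Measure Z) [IsProbabilityMeasure ν]
    (ℓ : ℝ → ℝ) (β : ℝ)
    (hlim : Filter.Tendsto ℓ Filter.atBot (nhds 0))
    (hLip : ∀ x y, |ℓ x - ℓ y| ≤ β * |x - y|)
    (p : Z → ℝ)
    (hmeas : Measurable p)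
    (hbdd : ∃ C : ℝ, ∀ z, |p z| ≤ C)
    (hbad : 0 < ν {z | p z ∉ Set.Icc (0 : ℝ) β}) :
    (⨆ f : {f : Z → ℝ // Integrable f ν},
      (((∫ z, f.1 z * p z ∂ν) - ∫ z, ℓ (f.1 z) ∂ν : ℝ) : EReal)) = ⊤ := by
  obtain ⟨C, hC⟩ := hbdd
  have hp : Integrable p ν := .of_bound hmeas.aestronglyMeasurable C (ae_of_all _ hC)
  have hsplit : ν {z | p z < 0} ≠ 0 ∨ ν {z | β < p z} ≠ 0 := by
    by_contra! h
    exact hbad.ne' (measure_mono_null (fun z hz => (not_and_or.1 hz).imp not_le.1 not_le.1)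
      (measure_union_null h.1 h.2))
  rcases hsplit with hneg | hbig
  · have hS : MeasurableSet {z | p z < 0} := hmeas measurableSet_Iio
    have hint := setIntegral_pos_of_pos (f := fun z => -p z) hS hp.neg.integrableOn
      (fun z hz => neg_pos.2 hz) hneg
    rw [integral_neg, neg_pos] at hint
    exact EReal.iSup_coe_eq_top_of_tendsto
      (fun c => ⟨_, (integrable_const (-c)).indicator hS⟩)
      (tendsto_conjObjective_indicator_neg hS hint hlim)
  · have hS : MeasurableSet {z | β < p z} := hmeas measurableSet_Ioi
    have hint := setIntegral_pos_of_pos (f := fun z => p z - β) hS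
      (hp.sub (integrable_const β)).integrableOn (fun z hz => sub_pos.2 hz) hbig
    rw [integral_sub hp.integrableOn (integrable_const β).integrableOn, setIntegral_const,
      smul_eq_mul, sub_pos, mul_comm] at hint
    have hgrowth (c : ℝ) (hc : 0 ≤ c) : ℓ c ≤ ℓ 0 + β * c := by
      have := (abs_le.1 (hLip c 0)).2
      rw [sub_zero, abs_of_nonneg hc] at this
      linarith
    exact EReal.iSup_coe_eq_top_of_tendsto
      (fun c => ⟨_, (integrable_const c).indicator hS⟩)
      (tendsto_conjObjective_indicator hS hgrowth hint)

theorem conj_functional_infinite_off_range {Z : Type*} [MeasurableSpace Z]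
    (ν : Measure Z) [IsProbabilityMeasure ν]
    (ℓ : ℝ → ℝ) (β : ℝ)
    (hconv : ConvexOn ℝ Set.univ ℓ)
    (hnonneg : ∀ x, 0 ≤ ℓ x)
    (hlim : Filter.Tendsto ℓ Filter.atBot (nhds 0))
    (hLip : ∀ x y, |ℓ x - ℓ y| ≤ β * |x - y|)
    (p : Z → ℝ)
    (hmeas : Measurable p)
    (hbdd : ∃ C : ℝ, ∀ z, |p z| ≤ C)
    (hbad : 0 < ν {z | p z ∉ Set.Icc (0 : ℝ) β}) :
    (⨆ f : {f : Z → ℝ // Integrable f ν},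
      (((∫ z, f.1 z * p z ∂ν) - ∫ z, ℓ (f.1 z) ∂ν : ℝ) : EReal)) = ⊤ :=
  conj_functional_infinite_off_range_general ν ℓ β hlim hLip p hmeas hbdd hbad
end
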